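/- Every independent set S of the interference graph G_{K,T} satisfies |S| ≤ K·(T + c)/2, where c = max_{i≠j} |l'_{ij}|. -/

import Mathlib

/-- The time-indexed interference graph `G_{K,T}` of the `K`-user LOS interference
channel with normalized cross-delays `l i j` (representing `l'_{ij}` for `i ≠ j`). -/
def interferenceGraph (K T : ℕ) (l : Fin K → Fin K → ℤ) :
    SimpleGraph (Fin K × Fin T) where
  Adj a b := a.1 ≠ b.1 ∧
    (((b.2 : ℕ) : ℤ) = ((a.2 : ℕ) : ℤ) + l b.1 a.1 ∨
     ((a.2 : ℕ) : ℤ) = ((b.2 : ℕ) : ℤ) + l a.1 b.1)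
  symm := by
    constructor
    rintro a b ⟨h1, h2⟩
    exact ⟨h1.symm, h2.symm⟩
  loopless := by
    constructor
    rintro a ⟨h, -⟩
    exact h rfl

/-! For two users `i ≠ j`, the slots used by `i` and the slots used by `j` shifted by the delay
`l i j` are disjoint (a coincidence would be an edge), and both lie in an integer interval of
length `T + |l i j|`; hence the row sizes satisfy `f i + f j ≤ T + c`. Summing this over all
ordered pairs of distinct users gives `2 (K - 1) |S| ≤ K (K - 1) (T + c)`. -/

open Finset

theorem Int.card_add_card_le_of_disjoint_image_add {A B : Finset ℤ} {n : ℕ}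
    (hA : A ⊆ Ico 0 (n : ℤ)) (hB : B ⊆ Ico 0 (n : ℤ)) {d : ℤ}
    (hAB : Disjoint A (B.image (· + d))) : #A + #B ≤ n + d.natAbs := by
  have hunion : A ∪ B.image (· + d) ⊆ Ico (min 0 d) (n + max 0 d) := by
    intro t ht
    simp only [mem_union, mem_image] at ht
    rcases ht with ht | ⟨s, hs, rfl⟩
    · have := mem_Ico.1 (hA ht)
      simp only [mem_Ico]
      omega
    · have := mem_Ico.1 (hB hs)
      simp only [mem_Ico]
      omega
  calc #A + #B = #(A ∪ B.image (· + d)) := by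
        rw [card_union_of_disjoint hAB, card_image_of_injective _ (add_left_injective d)]
    _ ≤ #(Ico (min 0 d) (n + max 0 d)) := card_le_card hunion
    _ = n + d.natAbs := by rw [Int.card_Ico]; omega

theorem Finset.two_mul_sum_le_card_mul_of_add_le {ι R : Type*} [CommRing R] [LinearOrder R]
    [IsStrictOrderedRing R] [DecidableEq ι] {s : Finset ι} (hs : 2 ≤ #s) {f : ι → R} {M : R}
    (h : ∀ i ∈ s, ∀ j ∈ s, i ≠ j → f i + f j ≤ M) : 2 * ∑ i ∈ s, f i ≤ #s * M := by
  have hpairs : ∑ i ∈ s, ∑ j ∈ s.erase i, (f i + f j) = 2 * (#s - 1) * ∑ i ∈ s, f i := by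
    have hrow : ∀ i ∈ s, ∑ j ∈ s.erase i, (f i + f j)
        = (#s - 1) * f i + (∑ j ∈ s, f j - f i) := by
      intro i hi
      rw [sum_add_distrib, sum_const, card_erase_of_mem hi, nsmul_eq_mul,
        Nat.cast_pred (by omega), sum_erase_eq_sub hi]
    rw [sum_congr rfl hrow, sum_add_distrib, sum_sub_distrib, sum_const, nsmul_eq_mul,
      ← mul_sum]
    ring
  have hbound : ∑ i ∈ s, ∑ j ∈ s.erase i, (f i + f j) ≤ #s * ((#s - 1) * M) := by
    calc ∑ i ∈ s, ∑ j ∈ s.erase i, (f i + f j) ≤ ∑ i ∈ s, ∑ _j ∈ s.erase i, M :=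
          sum_le_sum fun i hi => sum_le_sum fun j hj =>
            h i hi j (mem_of_mem_erase hj) (ne_of_mem_erase hj).symm
      _ = ∑ _i ∈ s, (#s - 1) * M := sum_congr rfl fun i hi => by
          rw [sum_const, card_erase_of_mem hi, nsmul_eq_mul, Nat.cast_pred (by omega)]
      _ = #s * ((#s - 1) * M) := by rw [sum_const, nsmul_eq_mul]
  have hpos : (0 : R) < #s - 1 := by
    rw [sub_pos]; exact_mod_cast (by omega : 1 < #s)
  refine le_of_mul_le_mul_left ?_ hpos
  nlinarith [hpairs, hbound]

section

variable {K T : ℕ}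

def rowTimes (S : Finset (Fin K × Fin T)) (i : Fin K) : Finset ℤ :=
  (S.filter (·.1 = i)).image fun p => ((p.2 : ℕ) : ℤ)

theorem card_rowTimes (S : Finset (Fin K × Fin T)) (i : Fin K) :
    #(rowTimes S i) = #(S.filter (·.1 = i)) := by
  refine card_image_of_injOn fun p hp q hq hpq => ?_
  simp only [coe_filter] at hp hq
  exact Prod.ext (hp.2.trans hq.2.symm) (Fin.ext (by exact_mod_cast hpq))

theorem card_eq_sum_card_rowTimes (S : Finset (Fin K × Fin T)) :
    #S = ∑ i, #(rowTimes S i) := by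
  simp only [card_rowTimes]
  exact card_eq_sum_card_fiberwise fun p _ => mem_univ p.1

theorem rowTimes_subset_Ico (S : Finset (Fin K × Fin T)) (i : Fin K) :
    rowTimes S i ⊆ Ico 0 (T : ℤ) := by
  intro t ht
  obtain ⟨p, -, rfl⟩ := mem_image.1 ht
  simp only [mem_Ico]
  omega

theorem card_rowTimes_add_card_rowTimes_le {l : Fin K → Fin K → ℤ} {S : Finset (Fin K × Fin T)}
    (hS : (interferenceGraph K T l).IsIndepSet S) {i j : Fin K} (hij : i ≠ j) :
    #(rowTimes S i) + #(rowTimes S j) ≤ T + (l i j).natAbs := by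
  refine Int.card_add_card_le_of_disjoint_image_add (rowTimes_subset_Ico S i)
    (rowTimes_subset_Ico S j) (disjoint_left.2 fun t hi hj => ?_)
  simp only [rowTimes, mem_image, mem_filter] at hi hj
  obtain ⟨p, ⟨hpS, rfl⟩, rfl⟩ := hi
  obtain ⟨_, ⟨q, ⟨hqS, rfl⟩, rfl⟩, hqp⟩ := hj
  exact hS hqS hpS (fun h => hij (congrArg Prod.fst h).symm) ⟨hij.symm, Or.inl hqp.symm⟩

end

theorem indep_set_card_bound_general (K T : ℕ) (hK : 2 ≤ K)
    (l : Fin K → Fin K → ℤ)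
    (S : Finset (Fin K × Fin T))
    (hS : ∀ u ∈ S, ∀ v ∈ S, ¬ (interferenceGraph K T l).Adj u v) :
    (S.card : ℝ) ≤ K * (T +
      (Finset.univ.sup
        (fun p : {p : Fin K × Fin K // p.1 ≠ p.2} => (l p.1.1 p.1.2).natAbs) : ℕ)) / 2 := by
  set c := Finset.univ.sup fun p : {p : Fin K × Fin K // p.1 ≠ p.2} => (l p.1.1 p.1.2).natAbs
  have hindep : (interferenceGraph K T l).IsIndepSet S := fun u hu v hv _ => hS u hu v hv
  have hpair : ∀ i ∈ univ, ∀ j ∈ univ, i ≠ j →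
      (#(rowTimes S i) : ℝ) + #(rowTimes S j) ≤ T + c := fun i _ j _ hij => by
    have hlc : (l i j).natAbs ≤ c := le_sup (f := fun p : {p : Fin K × Fin K // p.1 ≠ p.2} =>
      (l p.1.1 p.1.2).natAbs) (mem_univ ⟨(i, j), hij⟩)
    have := card_rowTimes_add_card_rowTimes_le hindep hij
    exact_mod_cast this.trans (by omega)
  have hsum := two_mul_sum_le_card_mul_of_add_le (by simpa using hK) hpair
  rw [card_univ, Fintype.card_fin] at hsum
  rw [card_eq_sum_card_rowTimes S, Nat.cast_sum]
  linarith

/-- Every independent set `S` of the interference graph `G_{K,T}` satisfies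
`|S| ≤ K·(T + c)/2`, where `c = max_{i≠j} |l'_{ij}|`. -/
theorem indep_set_card_bound (K T : ℕ) (hK : 2 ≤ K) (hT : 1 ≤ T)
    (l : Fin K → Fin K → ℤ)
    (S : Finset (Fin K × Fin T))
    (hS : ∀ u ∈ S, ∀ v ∈ S, ¬ (interferenceGraph K T l).Adj u v) :
    (S.card : ℝ) ≤ K * (T +
      (Finset.univ.sup
        (fun p : {p : Fin K × Fin K // p.1 ≠ p.2} => (l p.1.1 p.1.2).natAbs) : ℕ)) / 2 :=
  indep_set_card_bound_general K T hK l S hS
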